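/- Let s₁ > 0 > s₂ and let B be a 2×2 symmetric positive definite matrix. Then −s₁ tr B − s₂ tr(B⁻¹) ≤ −2s₂ tr(B⁻¹) − 2(s₁√(det B) − s₂/√(det B)); that is, a* ≤ a₀. -/

import Mathlib

open Matrix

/-!
Write `t = tr B` and `d = det B`. For a `2 × 2` matrix `tr B⁻¹ = t / d`, and then
`a₀ - a* = (s₁ - s₂ / d) (t - 2 √d)`. The first factor is positive by the signs of `s₁, s₂`; the
second is nonnegative by AM-GM applied to the eigenvalues of `B`.
-/

theorem Matrix.trace_adjugate_fin_two {R : Type*} [CommRing R] (A : Matrix (Fin 2) (Fin 2) R) :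
    A.adjugate.trace = A.trace := by
  simp [adjugate_fin_two, trace_fin_two, add_comm]

theorem Matrix.trace_inv_fin_two {K : Type*} [Field K] (A : Matrix (Fin 2) (Fin 2) K) :
    A⁻¹.trace = A.trace / A.det := by
  rw [inv_def, trace_smul, trace_adjugate_fin_two, Ring.inverse_eq_inv', smul_eq_mul,
    div_eq_inv_mul]

theorem Matrix.PosSemidef.det_rpow_le_trace_div_card {n : Type*} [Fintype n] [DecidableEq n]
    [Nonempty n] {A : Matrix n n ℝ} (hA : A.PosSemidef) :
    A.det ^ (Fintype.card n : ℝ)⁻¹ ≤ A.trace / Fintype.card n := by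
  have := Real.geom_mean_le_arith_mean Finset.univ (fun _ ↦ 1) hA.1.eigenvalues
    (fun _ _ ↦ zero_le_one) (by simpa using Fintype.card_pos) (fun i _ ↦ hA.eigenvalues_nonneg i)
  simpa [hA.1.det_eq_prod_eigenvalues, hA.1.trace_eq_sum_eigenvalues] using this

theorem Matrix.PosSemidef.two_mul_sqrt_det_le_trace {A : Matrix (Fin 2) (Fin 2) ℝ}
    (hA : A.PosSemidef) : 2 * √A.det ≤ A.trace := by
  have := hA.det_rpow_le_trace_div_card
  rw [Fintype.card_fin, Nat.cast_ofNat, ← one_div, ← Real.sqrt_eq_rpow] at this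
  linarith

theorem astar_le_a0 (s₁ s₂ : ℝ) (h₁ : 0 < s₁) (h₂ : s₂ < 0)
    (B : Matrix (Fin 2) (Fin 2) ℝ) (hB : B.PosDef) :
    -(s₁ * B.trace) - s₂ * B⁻¹.trace ≤
      -2 * s₂ * B⁻¹.trace - 2 * (s₁ * Real.sqrt B.det - s₂ / Real.sqrt B.det) := by
  have hdet : 0 < B.det := hB.det_pos
  have hsqrt : 0 < √B.det := Real.sqrt_pos.mpr hdet
  have hsq : √B.det ^ 2 = B.det := Real.sq_sqrt hdet.le
  have gap : 0 ≤ B.trace - 2 * √B.det := sub_nonneg.mpr hB.posSemidef.two_mul_sqrt_det_le_trace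
  have coeff : 0 ≤ s₁ - s₂ / B.det := by
    have : s₂ / B.det < 0 := div_neg_of_neg_of_pos h₂ hdet
    linarith
  rw [trace_inv_fin_two, ← sub_nonneg]
  set r := √B.det
  calc 0 ≤ (s₁ - s₂ / B.det) * (B.trace - 2 * r) := mul_nonneg coeff gap
    _ = _ := by rw [← hsq]; field_simp; ring
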